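/- arXiv:2106.02892 — 4 statements merged into one kernel-verified Lean document; each statement's English description precedes it below -/
import Mathlib

section
/- Let Φ(·; S, A) be an L-layer GCNN on N nodes with feature dimensions F_0, …, F_L whose nonlinearity σ is Lipschitz with constant C_σ and σ(0) = 0. Let S, S' ∈ ℝ^{N×N} and B ≥ 0, and suppose that for every layer ℓ and every feature pair (f, g): (i) ‖H_ℓ^{fg}(S)z‖₂ ≤ ‖z‖₂ and ‖H_ℓ^{fg}(S')z‖₂ ≤ ‖z‖₂ for all z ∈ ℝ^N, and (ii) ‖H_ℓ^{fg}(S)z − H_ℓ^{fg}(S')z‖₂ ≤ B‖z‖₂ for all z ∈ ℝ^N. Then for every input X ∈ ℝ^{N×F_0}: ‖Φ(X; S, A) − Φ(X; S', A)‖ ≤ B · L · C_σ^L · (∏_{ℓ=1}^{L} F_ℓ) · ‖X‖. -/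
/-- Euclidean (ℓ2) norm of a vector in `ℝ^N`. -/
noncomputable def vecEnorm {N : ℕ} (v : Fin N → ℝ) : ℝ :=
  Real.sqrt (∑ i, v i ^ 2)

/-- Polynomial graph filter `H(S) = ∑_{k=0}^{K} b_k S^k`. -/
noncomputable def gfilter {N : ℕ} (K : ℕ) (b : ℕ → ℝ) (S : Matrix (Fin N) (Fin N) ℝ) :
    Matrix (Fin N) (Fin N) ℝ :=
  ∑ k ∈ Finset.range (K + 1), b k • S ^ k

/-- `L`-layer GCNN features: `X_0 = X` and the `f`-th column of `X_{ℓ+1}` is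
`σ(∑_g H_{ℓ+1}^{fg}(S) [X_ℓ]_g)` applied entrywise, where
`H_ℓ^{fg}(S) = ∑_{k=0}^{K} b_{ℓ,k}^{fg} S^k`. -/
noncomputable def gcnn {N : ℕ} (K : ℕ) (F : ℕ → ℕ)
    (b : ℕ → ℕ → ℕ → ℕ → ℝ) (σ : ℝ → ℝ) (S : Matrix (Fin N) (Fin N) ℝ)
    (X : Matrix (Fin N) (Fin (F 0)) ℝ) : (ℓ : ℕ) → Matrix (Fin N) (Fin (F ℓ)) ℝ
  | 0 => X
  | ℓ + 1 => Matrix.of fun i f =>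
      σ (∑ g : Fin (F ℓ),
        (gfilter K (b (ℓ + 1) (f : ℕ) (g : ℕ)) S).mulVec
          (fun i' => gcnn K F b σ S X ℓ i' g) i)

/-- Norm of an `N×F` matrix: sum of Euclidean norms of its columns. -/
noncomputable def matColNorm {N F : ℕ} (X : Matrix (Fin N) (Fin F) ℝ) : ℝ :=
  ∑ f : Fin F, vecEnorm (fun i => X i f)

lemma vecEnorm_nonneg {N : ℕ} (v : Fin N → ℝ) : 0 ≤ vecEnorm v := Real.sqrt_nonneg _

lemma matColNorm_nonneg {N F : ℕ} (X : Matrix (Fin N) (Fin F) ℝ) : 0 ≤ matColNorm X :=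
  Finset.sum_nonneg fun _ _ => vecEnorm_nonneg _

lemma vecEnorm_eq_norm {N : ℕ} (v : Fin N → ℝ) :
    vecEnorm v = ‖(WithLp.equiv 2 (Fin N → ℝ)).symm v‖ := by
  simp [vecEnorm, EuclideanSpace.norm_eq, Real.norm_eq_abs, sq_abs]

lemma vecEnorm_sum_le {N : ℕ} {ι : Type*} (s : Finset ι) (w : ι → (Fin N → ℝ)) :
    vecEnorm (fun i => ∑ g ∈ s, w g i) ≤ ∑ g ∈ s, vecEnorm (w g) := by
  simp only [vecEnorm_eq_norm]
  have : (WithLp.equiv 2 (Fin N → ℝ)).symm (fun i => ∑ g ∈ s, w g i)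
      = ∑ g ∈ s, (WithLp.equiv 2 (Fin N → ℝ)).symm (w g) := by
    classical
    induction s using Finset.induction with
    | empty => ext i; simp
    | @insert a s h ih =>
        rw [Finset.sum_insert h, ← ih]
        ext i
        show (∑ g ∈ insert a s, w g i) = w a i + ∑ g ∈ s, w g i
        rw [Finset.sum_insert h]
  rw [this]
  exact norm_sum_le _ _

lemma vecEnorm_add_le {N : ℕ} (u v : Fin N → ℝ) :
    vecEnorm (fun i => u i + v i) ≤ vecEnorm u + vecEnorm v := by
  simp only [vecEnorm_eq_norm]
  have : (WithLp.equiv 2 (Fin N → ℝ)).symm (fun i => u i + v i)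
      = (WithLp.equiv 2 (Fin N → ℝ)).symm u + (WithLp.equiv 2 (Fin N → ℝ)).symm v := rfl
  rw [this]
  exact norm_add_le _ _

lemma vecEnorm_le_of_abs_le {N : ℕ} {C : ℝ} (hC : 0 ≤ C) {u v : Fin N → ℝ}
    (h : ∀ i, |u i| ≤ C * |v i|) : vecEnorm u ≤ C * vecEnorm v := by
  unfold vecEnorm
  rw [← Real.sqrt_sq hC, ← Real.sqrt_mul (by positivity), Finset.mul_sum]
  apply Real.sqrt_le_sqrt
  apply Finset.sum_le_sum
  intro i _
  calc u i ^ 2 = |u i| ^ 2 := (sq_abs _).symm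
    _ ≤ (C * |v i|) ^ 2 := by apply pow_le_pow_left₀ (abs_nonneg _) (h i)
    _ = C ^ 2 * v i ^ 2 := by rw [mul_pow, sq_abs]

/-- Let `Φ(·; S, A)` be an `L`-layer GCNN whose nonlinearity `σ` is Lipschitz
with constant `C_σ` and `σ(0) = 0`. Let `S, S'` and `B ≥ 0`, and suppose every filter
satisfies (i) `‖H_ℓ^{fg}(S)z‖₂ ≤ ‖z‖₂` and `‖H_ℓ^{fg}(S')z‖₂ ≤ ‖z‖₂` for all `z`, and
(ii) `‖H_ℓ^{fg}(S)z − H_ℓ^{fg}(S')z‖₂ ≤ B‖z‖₂` for all `z`. Then for every input `X`: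
`‖Φ(X; S, A) − Φ(X; S', A)‖ ≤ B · L · C_σ^L · (∏_{ℓ=1}^{L} F_ℓ) · ‖X‖`. -/
theorem gcnn_difference_bound {N L K : ℕ} (F : ℕ → ℕ) (b : ℕ → ℕ → ℕ → ℕ → ℝ)
    (σ : ℝ → ℝ) (Cσ B : ℝ) (hCσ : 0 < Cσ) (hB : 0 ≤ B)
    (hσ0 : σ 0 = 0) (hσ : ∀ a c : ℝ, |σ a - σ c| ≤ Cσ * |a - c|)
    (S S' : Matrix (Fin N) (Fin N) ℝ)
    (hbdS : ∀ ℓ, 1 ≤ ℓ → ℓ ≤ L → ∀ f < F ℓ, ∀ g < F (ℓ - 1), ∀ z : Fin N → ℝ,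
      vecEnorm ((gfilter K (b ℓ f g) S).mulVec z) ≤ vecEnorm z)
    (hbdS' : ∀ ℓ, 1 ≤ ℓ → ℓ ≤ L → ∀ f < F ℓ, ∀ g < F (ℓ - 1), ∀ z : Fin N → ℝ,
      vecEnorm ((gfilter K (b ℓ f g) S').mulVec z) ≤ vecEnorm z)
    (hdiff : ∀ ℓ, 1 ≤ ℓ → ℓ ≤ L → ∀ f < F ℓ, ∀ g < F (ℓ - 1), ∀ z : Fin N → ℝ,
      vecEnorm ((gfilter K (b ℓ f g) S).mulVec z - (gfilter K (b ℓ f g) S').mulVec z) ≤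
        B * vecEnorm z) :
    ∀ X : Matrix (Fin N) (Fin (F 0)) ℝ,
      matColNorm (gcnn K F b σ S X L - gcnn K F b σ S' X L) ≤
        B * L * Cσ ^ L * (∏ ℓ ∈ Finset.Icc 1 L, (F ℓ : ℝ)) * matColNorm X := by
  intro X
  have hCσ' : (0:ℝ) ≤ Cσ := le_of_lt hCσ
  have hXnn : 0 ≤ matColNorm X := matColNorm_nonneg X
  -- Lipschitz transfer for vecEnorm
  have hlip : ∀ (u v : Fin N → ℝ),
      vecEnorm (fun i => σ (u i) - σ (v i)) ≤ Cσ * vecEnorm (fun i => u i - v i) := by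
    intro u v
    apply vecEnorm_le_of_abs_le hCσ'
    intro i
    calc |σ (u i) - σ (v i)| ≤ Cσ * |u i - v i| := hσ _ _
      _ = Cσ * |(fun i => u i - v i) i| := rfl
  have hlip0 : ∀ (u : Fin N → ℝ), vecEnorm (fun i => σ (u i)) ≤ Cσ * vecEnorm u := by
    intro u
    apply vecEnorm_le_of_abs_le hCσ'
    intro i
    have h := hσ (u i) 0
    rw [hσ0] at h
    simp only [sub_zero] at h
    exact h
  have key : ∀ ℓ, ℓ ≤ L →
      matColNorm (gcnn K F b σ S X ℓ) ≤
        Cσ ^ ℓ * (∏ j ∈ Finset.Icc 1 ℓ, (F j : ℝ)) * matColNorm X ∧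
      matColNorm (gcnn K F b σ S X ℓ - gcnn K F b σ S' X ℓ) ≤
        B * ℓ * Cσ ^ ℓ * (∏ j ∈ Finset.Icc 1 ℓ, (F j : ℝ)) * matColNorm X := by
    intro ℓ
    induction ℓ with
    | zero =>
        intro _
        constructor
        · simp [gcnn]
        · simp [gcnn, matColNorm, vecEnorm]
    | succ ℓ ih =>
        intro hL
        obtain ⟨hA, hD⟩ := ih (le_trans (Nat.le_succ ℓ) hL)
        have h1 : 1 ≤ ℓ + 1 := Nat.succ_le_succ (Nat.zero_le ℓ)
        set Xl := gcnn K F b σ S X ℓ with hXl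
        set Xl' := gcnn K F b σ S' X ℓ with hXl'
        have hXlnn : 0 ≤ matColNorm Xl := matColNorm_nonneg _
        have hPnn : 0 ≤ ∏ j ∈ Finset.Icc 1 ℓ, (F j : ℝ) :=
          Finset.prod_nonneg fun _ _ => Nat.cast_nonneg _
        -- the pre-activation vectors
        set yS : Fin (F (ℓ+1)) → Fin N → ℝ := fun f i =>
          ∑ g : Fin (F ℓ), (gfilter K (b (ℓ + 1) (f : ℕ) (g : ℕ)) S).mulVec
            (fun i' => Xl i' g) i with hyS
        set yS' : Fin (F (ℓ+1)) → Fin N → ℝ := fun f i =>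
          ∑ g : Fin (F ℓ), (gfilter K (b (ℓ + 1) (f : ℕ) (g : ℕ)) S').mulVec
            (fun i' => Xl' i' g) i with hyS'
        have hgS : gcnn K F b σ S X (ℓ+1) = Matrix.of fun i f => σ (yS f i) := rfl
        have hgS' : gcnn K F b σ S' X (ℓ+1) = Matrix.of fun i f => σ (yS' f i) := rfl
        have hglt : ∀ g : Fin (F ℓ), (g : ℕ) < F (ℓ + 1 - 1) := by
          intro g; exact g.isLt
        -- Part A
        have partA : matColNorm (gcnn K F b σ S X (ℓ+1)) ≤
            Cσ ^ (ℓ+1) * (∏ j ∈ Finset.Icc 1 (ℓ+1), (F j : ℝ)) * matColNorm X := by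
          have hcol : ∀ f : Fin (F (ℓ+1)),
              vecEnorm (fun i => σ (yS f i)) ≤ Cσ * matColNorm Xl := by
            intro f
            calc vecEnorm (fun i => σ (yS f i)) ≤ Cσ * vecEnorm (yS f) := hlip0 _
              _ ≤ Cσ * matColNorm Xl := by
                  apply mul_le_mul_of_nonneg_left _ hCσ'
                  calc vecEnorm (yS f)
                      ≤ ∑ g : Fin (F ℓ), vecEnorm
                          ((gfilter K (b (ℓ + 1) (f : ℕ) (g : ℕ)) S).mulVec
                            (fun i' => Xl i' g)) := vecEnorm_sum_le _ _
                    _ ≤ ∑ g : Fin (F ℓ), vecEnorm (fun i' => Xl i' g) := by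
                        apply Finset.sum_le_sum
                        intro g _
                        exact hbdS (ℓ+1) h1 hL (f : ℕ) f.isLt (g : ℕ) (hglt g) _
                    _ = matColNorm Xl := rfl
          calc matColNorm (gcnn K F b σ S X (ℓ+1))
              = ∑ f : Fin (F (ℓ+1)), vecEnorm (fun i => σ (yS f i)) := by
                rw [hgS]; rfl
            _ ≤ ∑ _f : Fin (F (ℓ+1)), Cσ * matColNorm Xl :=
                Finset.sum_le_sum fun f _ => hcol f
            _ = (F (ℓ+1) : ℝ) * (Cσ * matColNorm Xl) := by
                rw [Finset.sum_const, Finset.card_univ, Fintype.card_fin, nsmul_eq_mul]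
            _ ≤ (F (ℓ+1) : ℝ) * (Cσ * (Cσ ^ ℓ * (∏ j ∈ Finset.Icc 1 ℓ, (F j : ℝ))
                  * matColNorm X)) := by
                apply mul_le_mul_of_nonneg_left _ (Nat.cast_nonneg _)
                exact mul_le_mul_of_nonneg_left hA hCσ'
            _ = Cσ ^ (ℓ+1) * (∏ j ∈ Finset.Icc 1 (ℓ+1), (F j : ℝ)) * matColNorm X := by
                rw [Finset.prod_Icc_succ_top h1]
                ring
        refine ⟨partA, ?_⟩
        -- Part D
        have hcolD : ∀ f : Fin (F (ℓ+1)),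
            vecEnorm (fun i => σ (yS f i) - σ (yS' f i)) ≤
              Cσ * (B * matColNorm Xl + matColNorm (Xl - Xl')) := by
          intro f
          have step1 : vecEnorm (fun i => σ (yS f i) - σ (yS' f i)) ≤
              Cσ * vecEnorm (fun i => yS f i - yS' f i) := hlip _ _
          have step2 : vecEnorm (fun i => yS f i - yS' f i) ≤
              B * matColNorm Xl + matColNorm (Xl - Xl') := by
            have hrw : (fun i => yS f i - yS' f i) = fun i =>
                ∑ g : Fin (F ℓ),
                  (((gfilter K (b (ℓ + 1) (f : ℕ) (g : ℕ)) S).mulVec (fun i' => Xl i' g)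
                    - (gfilter K (b (ℓ + 1) (f : ℕ) (g : ℕ)) S').mulVec (fun i' => Xl i' g)) i
                  + ((gfilter K (b (ℓ + 1) (f : ℕ) (g : ℕ)) S').mulVec
                      (fun i' => Xl i' g - Xl' i' g)) i) := by
              funext i
              rw [hyS, hyS']
              rw [← Finset.sum_sub_distrib]
              apply Finset.sum_congr rfl
              intro g _
              have : (gfilter K (b (ℓ + 1) (f : ℕ) (g : ℕ)) S').mulVec
                  (fun i' => Xl i' g - Xl' i' g) =
                  (gfilter K (b (ℓ + 1) (f : ℕ) (g : ℕ)) S').mulVec (fun i' => Xl i' g)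
                  - (gfilter K (b (ℓ + 1) (f : ℕ) (g : ℕ)) S').mulVec (fun i' => Xl' i' g) := by
                rw [← Matrix.mulVec_sub]
                rfl
              rw [this]
              simp [Pi.sub_apply]
            rw [hrw]
            calc vecEnorm (fun i => ∑ g : Fin (F ℓ), _)
                ≤ ∑ g : Fin (F ℓ), vecEnorm (fun i =>
                  (((gfilter K (b (ℓ + 1) (f : ℕ) (g : ℕ)) S).mulVec (fun i' => Xl i' g)
                    - (gfilter K (b (ℓ + 1) (f : ℕ) (g : ℕ)) S').mulVec (fun i' => Xl i' g)) i
                  + ((gfilter K (b (ℓ + 1) (f : ℕ) (g : ℕ)) S').mulVec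
                      (fun i' => Xl i' g - Xl' i' g)) i)) := vecEnorm_sum_le _ _
              _ ≤ ∑ g : Fin (F ℓ),
                    (B * vecEnorm (fun i' => Xl i' g) + vecEnorm (fun i' => Xl i' g - Xl' i' g)) := by
                  apply Finset.sum_le_sum
                  intro g _
                  calc vecEnorm (fun i =>
                        (((gfilter K (b (ℓ + 1) (f : ℕ) (g : ℕ)) S).mulVec (fun i' => Xl i' g)
                          - (gfilter K (b (ℓ + 1) (f : ℕ) (g : ℕ)) S').mulVec
                            (fun i' => Xl i' g)) i
                        + ((gfilter K (b (ℓ + 1) (f : ℕ) (g : ℕ)) S').mulVec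
                            (fun i' => Xl i' g - Xl' i' g)) i))
                      ≤ vecEnorm ((gfilter K (b (ℓ + 1) (f : ℕ) (g : ℕ)) S).mulVec
                            (fun i' => Xl i' g)
                          - (gfilter K (b (ℓ + 1) (f : ℕ) (g : ℕ)) S').mulVec
                            (fun i' => Xl i' g))
                        + vecEnorm ((gfilter K (b (ℓ + 1) (f : ℕ) (g : ℕ)) S').mulVec
                            (fun i' => Xl i' g - Xl' i' g)) := vecEnorm_add_le _ _
                    _ ≤ B * vecEnorm (fun i' => Xl i' g) + vecEnorm (fun i' => Xl i' g - Xl' i' g) := by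
                        apply add_le_add
                        · exact hdiff (ℓ+1) h1 hL (f : ℕ) f.isLt (g : ℕ) (hglt g) _
                        · exact hbdS' (ℓ+1) h1 hL (f : ℕ) f.isLt (g : ℕ) (hglt g) _
              _ = B * matColNorm Xl + matColNorm (Xl - Xl') := by
                  rw [Finset.sum_add_distrib, ← Finset.mul_sum]
                  rfl
          calc vecEnorm (fun i => σ (yS f i) - σ (yS' f i))
              ≤ Cσ * vecEnorm (fun i => yS f i - yS' f i) := step1
            _ ≤ Cσ * (B * matColNorm Xl + matColNorm (Xl - Xl')) :=
                mul_le_mul_of_nonneg_left step2 hCσ'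
        calc matColNorm (gcnn K F b σ S X (ℓ+1) - gcnn K F b σ S' X (ℓ+1))
            = ∑ f : Fin (F (ℓ+1)), vecEnorm (fun i => σ (yS f i) - σ (yS' f i)) := by
              rw [hgS, hgS']; rfl
          _ ≤ ∑ _f : Fin (F (ℓ+1)), Cσ * (B * matColNorm Xl + matColNorm (Xl - Xl')) :=
              Finset.sum_le_sum fun f _ => hcolD f
          _ = (F (ℓ+1) : ℝ) * (Cσ * (B * matColNorm Xl + matColNorm (Xl - Xl'))) := by
              rw [Finset.sum_const, Finset.card_univ, Fintype.card_fin, nsmul_eq_mul]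
          _ ≤ (F (ℓ+1) : ℝ) * (Cσ * (B * (Cσ ^ ℓ * (∏ j ∈ Finset.Icc 1 ℓ, (F j : ℝ))
                * matColNorm X)
              + B * ℓ * Cσ ^ ℓ * (∏ j ∈ Finset.Icc 1 ℓ, (F j : ℝ)) * matColNorm X)) := by
              apply mul_le_mul_of_nonneg_left _ (Nat.cast_nonneg _)
              apply mul_le_mul_of_nonneg_left _ hCσ'
              exact add_le_add (mul_le_mul_of_nonneg_left hA hB) hD
          _ = B * (ℓ+1 : ℕ) * Cσ ^ (ℓ+1) * (∏ j ∈ Finset.Icc 1 (ℓ+1), (F j : ℝ))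
                * matColNorm X := by
              rw [Finset.prod_Icc_succ_top h1]
              push_cast
              ring
  exact (key L le_rfl).2
end

section
/- If a real polynomial h(λ) = Σ_{k=0}^{K} b_k λ^k satisfies the integral Lipschitz condition |h(λ_1) − h(λ_2)| ≤ 2 C_L |λ_2 − λ_1| / |λ_1 + λ_2| for all λ_1, λ_2 ∈ ℝ with λ_1 + λ_2 ≠ 0, where C_L > 0, then its derivative satisfies |λ h'(λ)| ≤ C_L for all λ ∈ ℝ. -/
/-- If a real polynomial `h(λ) = ∑_{k=0}^{K} b_k λ^k` satisfies the integral
Lipschitz condition `|h(λ₁) − h(λ₂)| ≤ 2 C_L |λ₂ − λ₁| / |λ₁ + λ₂|` for all `λ₁, λ₂ ∈ ℝ`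
with `C_L > 0`, then its derivative
`h'(λ) = ∑_{k=1}^{K} k b_k λ^{k−1}` satisfies `|λ h'(λ)| ≤ C_L` for all `λ ∈ ℝ`. -/
theorem integralLipschitz_deriv_bound (K : ℕ) (b : ℕ → ℝ) (CL : ℝ) (hCL : 0 < CL)
    (hIL : ∀ l1 l2 : ℝ, l1 + l2 ≠ 0 →
      |(∑ k ∈ Finset.range (K + 1), b k * l1 ^ k) -
        (∑ k ∈ Finset.range (K + 1), b k * l2 ^ k)| ≤ 2 * CL * |l2 - l1| / |l1 + l2|) :
    ∀ l : ℝ, |l * ∑ k ∈ Finset.Icc 1 K, (k : ℝ) * b k * l ^ (k - 1)| ≤ CL := by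
  intro l
  rcases eq_or_ne l 0 with rfl | hl
  · simpa using hCL.le
  set f : ℝ → ℝ := fun x => ∑ k ∈ Finset.range (K + 1), b k * x ^ k with hf
  set D : ℝ := ∑ k ∈ Finset.range (K + 1), b k * ((k : ℝ) * l ^ (k - 1)) with hD
  have hsum : (∑ k ∈ Finset.Icc 1 K, (k : ℝ) * b k * l ^ (k - 1)) = D := by
    rw [hD]
    rw [show (∑ k ∈ Finset.Icc 1 K, (k : ℝ) * b k * l ^ (k - 1))
        = ∑ k ∈ Finset.Icc 1 K, b k * ((k : ℝ) * l ^ (k - 1)) from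
      Finset.sum_congr rfl fun k _ => by ring]
    refine Finset.sum_subset ?_ ?_
    · intro x hx
      simp only [Finset.mem_Icc, Finset.mem_range] at hx ⊢
      omega
    · intro x hx hnx
      simp only [Finset.mem_Icc, Finset.mem_range] at hx hnx
      have : x = 0 := by omega
      simp [this]
  rw [hsum]
  have hder : HasDerivAt f D l := by
    rw [hD]
    exact HasDerivAt.fun_sum fun k _ => (hasDerivAt_pow k l).const_mul (b k)
  -- right slope
  have h1 : Filter.Tendsto (fun t : ℝ => t⁻¹ * (f (l + t) - f l)) (nhdsWithin 0 (Set.Ioi 0))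
      (nhds D) := hder.tendsto_slope_zero_right
  have hneg : Filter.Tendsto (fun t : ℝ => -t) (nhdsWithin 0 (Set.Ioi 0))
      (nhdsWithin 0 (Set.Iio 0)) := by
    apply tendsto_nhdsWithin_of_tendsto_nhds_of_eventually_within
    · simpa using (continuous_neg.tendsto (0 : ℝ)).mono_left nhdsWithin_le_nhds
    · filter_upwards [self_mem_nhdsWithin] with t ht
      exact neg_lt_zero.mpr (show (0:ℝ) < t from ht)
  have h2 : Filter.Tendsto (fun t : ℝ => (-t)⁻¹ * (f (l + -t) - f l))
      (nhdsWithin 0 (Set.Ioi 0)) (nhds D) := hder.tendsto_slope_zero_left.comp hneg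
  have h3 : Filter.Tendsto
      (fun t : ℝ => l * ((t⁻¹ * (f (l + t) - f l) + (-t)⁻¹ * (f (l + -t) - f l)) / 2))
      (nhdsWithin 0 (Set.Ioi 0)) (nhds (l * D)) := by
    have := ((h1.add h2).div_const 2).const_mul l
    simpa using this.congr' (by filter_upwards with t; ring_nf)
  have h4 : Filter.Tendsto
      (fun t : ℝ => |l * ((t⁻¹ * (f (l + t) - f l) + (-t)⁻¹ * (f (l + -t) - f l)) / 2)|)
      (nhdsWithin 0 (Set.Ioi 0)) (nhds |l * D|) := h3.abs
  have hbound : ∀ᶠ t in nhdsWithin (0 : ℝ) (Set.Ioi 0),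
      |l * ((t⁻¹ * (f (l + t) - f l) + (-t)⁻¹ * (f (l + -t) - f l)) / 2)| ≤ CL := by
    filter_upwards [self_mem_nhdsWithin] with t ht
    have ht0 : (0 : ℝ) < t := ht
    have hne : (l + t) + (l - t) ≠ 0 := by
      intro h; apply hl; linarith
    have key := hIL (l + t) (l - t) hne
    have e1 : |(l - t) - (l + t)| = 2 * t := by
      rw [show (l - t) - (l + t) = -(2 * t) by ring, abs_neg, abs_of_pos (by linarith)]
    have e2 : |(l + t) + (l - t)| = 2 * |l| := by
      rw [show (l + t) + (l - t) = 2 * l by ring, abs_mul]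
      norm_num
    rw [e1, e2] at key
    have htne : t ≠ 0 := ht0.ne'
    have hFeq : l * ((t⁻¹ * (f (l + t) - f l) + (-t)⁻¹ * (f (l + -t) - f l)) / 2)
        = l * ((f (l + t) - f (l - t)) / (2 * t)) := by
      have h : l + -t = l - t := by ring
      rw [h, inv_neg]
      have e3 : t⁻¹ * (f (l + t) - f l) + -t⁻¹ * (f (l - t) - f l)
          = t⁻¹ * (f (l + t) - f (l - t)) := by ring
      rw [e3, inv_mul_eq_div, div_div, mul_comm t 2]
    rw [hFeq, abs_mul, abs_div, abs_of_pos (by linarith : (0:ℝ) < 2 * t),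
      ← mul_div_assoc, div_le_iff₀ (by linarith : (0:ℝ) < 2 * t)]
    have hlpos : 0 < |l| := abs_pos.mpr hl
    have h5 : |l| * |f (l + t) - f (l - t)| ≤ |l| * (2 * CL * (2 * t) / (2 * |l|)) := by
      apply mul_le_mul_of_nonneg_left _ (abs_nonneg l)
      exact key
    have h6 : |l| * (2 * CL * (2 * t) / (2 * |l|)) = CL * (2 * t) := by
      field_simp
    linarith
  exact le_of_tendsto h4 hbound
end

section
/- Let G be a connected simple graph on N vertices that admits an α-realizable q-partition into clusters G_0, …, G_{q−1}, each cluster being a connected induced subgraph. Let G' be obtained from G by deleting only intra-cluster edges (every deleted edge has both endpoints in the same cluster V_κ), and suppose the induced subgraphs G'_0, …, G'_{q−1} of G' on the same vertex sets V_0, …, V_{q−1} are each connected and form an α'-realizable q-partition of G'. Let u_0, …, u_{N−1} and u'_0, …, u'_{N−1} be orthonormal eigenbases of the Laplacians L(G) and L(G') respectively, ordered by increasing eigenvalue. Then √(Σ_{κ=0}^{q−1} Σ_{i=q}^{N−1} |u_κᵀ u'_i|²) ≤ α + α'. -/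
/-- Dot product of two vectors in `ℝ^N`. -/
def dotp {N : ℕ} (v w : Fin N → ℝ) : ℝ := ∑ a, v a * w a

/-- Number of edges of `G` with exactly one endpoint in `A` (counted once, with the first
endpoint inside `A`), i.e. `|E(G, G_κ)|`. -/
def cutCard {N : ℕ} (G : SimpleGraph (Fin N)) [DecidableRel G.Adj]
    (A : Finset (Fin N)) : ℕ :=
  (Finset.univ.filter fun p : Fin N × Fin N => G.Adj p.1 p.2 ∧ p.1 ∈ A ∧ p.2 ∉ A).card

/-- Relative subgraph degree `β_G(G_κ) = |E(G, G_κ)| / √|V_κ|`. -/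
noncomputable def relDeg {N : ℕ} (G : SimpleGraph (Fin N)) [DecidableRel G.Adj]
    (A : Finset (Fin N)) : ℝ :=
  (cutCard G A : ℝ) / Real.sqrt (A.card)

/-- Average relative subgraph degree `β̄_G(G_0,…,G_{q−1}) = √((1/q) ∑_κ β_G(G_κ)²)`. -/
noncomputable def avgRelDeg {N q : ℕ} (G : SimpleGraph (Fin N)) [DecidableRel G.Adj]
    (Vs : Fin q → Finset (Fin N)) : ℝ :=
  Real.sqrt ((1 / (q : ℝ)) * ∑ κ, relDeg G (Vs κ) ^ 2)



open Matrix

noncomputable def xvec {N q : ℕ} (Vs : Fin q → Finset (Fin N)) (κ : Fin q) : Fin N → ℝ :=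
  fun a => if a ∈ Vs κ then 1 / Real.sqrt ((Vs κ).card) else 0

lemma dotp_comm {N : ℕ} (v w : Fin N → ℝ) : dotp v w = dotp w v := by
  unfold dotp; exact Finset.sum_congr rfl fun a _ => mul_comm _ _

lemma xvec_orth {N q : ℕ} (Vs : Fin q → Finset (Fin N))
    (hdisj : ∀ κ κ' : Fin q, κ ≠ κ' → Disjoint (Vs κ) (Vs κ'))
    (hne : ∀ κ, 0 < (Vs κ).card) (κ κ' : Fin q) :
    dotp (xvec Vs κ) (xvec Vs κ') = if κ = κ' then 1 else 0 := by
  unfold dotp xvec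
  split_ifs with h
  · subst h
    have hm : (0:ℝ) < ((Vs κ).card : ℝ) := by exact_mod_cast hne κ
    have : ∀ a : Fin N, (if a ∈ Vs κ then 1 / Real.sqrt ((Vs κ).card) else 0) *
        (if a ∈ Vs κ then 1 / Real.sqrt ((Vs κ).card) else 0)
        = (if a ∈ Vs κ then 1 / ((Vs κ).card : ℝ) else 0) := by
      intro a
      split_ifs with ha
      · rw [div_mul_div_comm, one_mul, Real.mul_self_sqrt hm.le]
      · ring
    rw [Finset.sum_congr rfl fun a _ => this a, Finset.sum_ite_mem,
      Finset.univ_inter, Finset.sum_const, nsmul_eq_mul]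
    field_simp
  · refine Finset.sum_eq_zero fun a _ => ?_
    split_ifs with h1 h2
    · exact absurd (Finset.disjoint_left.mp (hdisj κ κ' h) h1) (fun hc => hc h2)
    · ring
    · ring
    · ring


lemma parseval {N : ℕ} (u : Fin N → Fin N → ℝ)
    (horth : ∀ i j, dotp (u i) (u j) = if i = j then 1 else 0)
    (y : Fin N → ℝ) : ∑ i, dotp y (u i) ^ 2 = ∑ a, y a ^ 2 := by
  classical
  set U : Matrix (Fin N) (Fin N) ℝ := Matrix.of (fun i a => u i a) with hU
  have hUU : U * Uᵀ = 1 := by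
    ext i j
    simpa [Matrix.mul_apply, dotp, Matrix.one_apply, hU] using horth i j
  have hUtU : Uᵀ * U = 1 := mul_eq_one_comm.mp hUU
  have key : ∀ a b : Fin N, (∑ i, u i a * u i b) = if a = b then (1:ℝ) else 0 := by
    intro a b
    have := congrFun (congrFun hUtU a) b
    simpa [Matrix.mul_apply, Matrix.one_apply, hU] using this
  calc ∑ i, dotp y (u i) ^ 2
      = ∑ i, ∑ a, ∑ b, (y a * y b) * (u i a * u i b) := by
        refine Finset.sum_congr rfl fun i _ => ?_
        rw [dotp, pow_two, Finset.sum_mul_sum]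
        exact Finset.sum_congr rfl fun a _ => Finset.sum_congr rfl fun b _ => by ring
    _ = ∑ a, ∑ i, ∑ b, (y a * y b) * (u i a * u i b) := Finset.sum_comm
    _ = ∑ a, ∑ b, ∑ i, (y a * y b) * (u i a * u i b) := by
        exact Finset.sum_congr rfl fun a _ => Finset.sum_comm
    _ = ∑ a, ∑ b, (y a * y b) * ∑ i, (u i a * u i b) := by
        refine Finset.sum_congr rfl fun a _ => Finset.sum_congr rfl fun b _ => ?_
        rw [Finset.mul_sum]
    _ = ∑ a, y a ^ 2 := by
        refine Finset.sum_congr rfl fun a _ => ?_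
        simp only [key, mul_ite, mul_one, mul_zero]
        rw [Finset.sum_ite_eq Finset.univ a (fun b => y a * y b)] <;> simp [pow_two]

lemma dotp_mulVec_eig {N : ℕ} (G : SimpleGraph (Fin N)) [DecidableRel G.Adj]
    (c : ℝ) (ui x : Fin N → ℝ)
    (h : (G.lapMatrix ℝ).mulVec ui = c • ui) :
    dotp ((G.lapMatrix ℝ).mulVec x) ui = c * dotp x ui := by
  have hsym : ∀ a b : Fin N, G.lapMatrix ℝ a b = G.lapMatrix ℝ b a := by
    intro a b
    have := (SimpleGraph.isSymm_lapMatrix G (R := ℝ))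
    exact this.apply b a
  calc dotp ((G.lapMatrix ℝ).mulVec x) ui
      = ∑ a, ∑ b, (G.lapMatrix ℝ a b * x b) * ui a := by
        unfold dotp
        refine Finset.sum_congr rfl fun a _ => ?_
        rw [Matrix.mulVec, dotProduct, Finset.sum_mul]
    _ = ∑ b, ∑ a, (G.lapMatrix ℝ a b * x b) * ui a := Finset.sum_comm
    _ = ∑ b, x b * ((G.lapMatrix ℝ).mulVec ui b) := by
        refine Finset.sum_congr rfl fun b _ => ?_
        rw [Matrix.mulVec, dotProduct, Finset.mul_sum]
        refine Finset.sum_congr rfl fun a _ => ?_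
        rw [hsym a b]; ring
    _ = c * dotp x ui := by
        rw [h]; unfold dotp; rw [Finset.mul_sum]
        refine Finset.sum_congr rfl fun b _ => ?_
        simp; ring


lemma sum_sq_le {γ : Type*} {s : Finset γ} (f : γ → ℝ) (hf : ∀ i ∈ s, 0 ≤ f i) :
    ∑ i ∈ s, f i ^ 2 ≤ (∑ i ∈ s, f i) ^ 2 := by
  have h1 : ∀ i ∈ s, f i ^ 2 ≤ f i * ∑ j ∈ s, f j := fun i hi => by
    rw [pow_two]
    exact mul_le_mul_of_nonneg_left (Finset.single_le_sum hf hi) (hf i hi)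
  calc ∑ i ∈ s, f i ^ 2 ≤ ∑ i ∈ s, f i * ∑ j ∈ s, f j := Finset.sum_le_sum h1
    _ = (∑ i ∈ s, f i) ^ 2 := by rw [← Finset.sum_mul, pow_two]

lemma cutCard_eq_out {N : ℕ} (G : SimpleGraph (Fin N)) [DecidableRel G.Adj]
    (A : Finset (Fin N)) :
    cutCard G A = ∑ a ∈ A, (G.neighborFinset a \ A).card := by
  unfold cutCard
  rw [Finset.card_filter, Fintype.sum_prod_type]
  have h1 : ∀ a : Fin N, (∑ c, if (G.Adj a c ∧ a ∈ A ∧ c ∉ A) then 1 else 0)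
      = if a ∈ A then (G.neighborFinset a \ A).card else 0 := by
    intro a
    split_ifs with ha
    · rw [Finset.card_eq_sum_ones, ← Finset.sum_filter]
      apply Finset.sum_congr _ (fun _ _ => rfl)
      ext c
      simp [ha, Finset.mem_sdiff, SimpleGraph.mem_neighborFinset]
    · refine Finset.sum_eq_zero fun c _ => ?_
      simp [ha]
  rw [Finset.sum_congr rfl fun a _ => h1 a, Finset.sum_ite_mem, Finset.univ_inter]

lemma cutCard_eq_in {N : ℕ} (G : SimpleGraph (Fin N)) [DecidableRel G.Adj]
    (A : Finset (Fin N)) :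
    cutCard G A = ∑ a ∈ Aᶜ, (G.neighborFinset a ∩ A).card := by
  unfold cutCard
  rw [Finset.card_nbij' (fun p => Prod.swap p) (fun p => Prod.swap p)
    (t := Finset.univ.filter fun p : Fin N × Fin N => G.Adj p.1 p.2 ∧ p.2 ∈ A ∧ p.1 ∉ A)]
  · rw [Finset.card_filter, Fintype.sum_prod_type]
    have h1 : ∀ a : Fin N, (∑ c, if (G.Adj a c ∧ c ∈ A ∧ a ∉ A) then 1 else 0)
        = if a ∈ Aᶜ then (G.neighborFinset a ∩ A).card else 0 := by
      intro a
      by_cases ha : a ∈ A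
      · rw [if_neg (by simp [ha])]
        refine Finset.sum_eq_zero fun c _ => ?_
        simp [ha]
      · rw [if_pos (by simp [ha])]
        rw [Finset.card_eq_sum_ones, ← Finset.sum_filter]
        apply Finset.sum_congr _ (fun _ _ => rfl)
        ext c
        simp [ha, Finset.mem_inter, SimpleGraph.mem_neighborFinset]
    rw [Finset.sum_congr rfl fun a _ => h1 a, Finset.sum_ite_mem, Finset.univ_inter]
  · intro p hp
    simp only [Finset.coe_filter, Finset.mem_univ, true_and, Set.mem_setOf_eq] at hp ⊢
    exact ⟨hp.1.symm, hp.2.1, hp.2.2⟩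
  · intro p hp
    simp only [Finset.coe_filter, Finset.mem_univ, true_and, Set.mem_setOf_eq] at hp ⊢
    exact ⟨hp.1.symm, hp.2.1, hp.2.2⟩
  · intro p _; rfl
  · intro p _; rfl

lemma lap_xvec_bound {N q : ℕ} (G : SimpleGraph (Fin N)) [DecidableRel G.Adj]
    (Vs : Fin q → Finset (Fin N)) (κ : Fin q) (hm : 0 < (Vs κ).card) :
    ∑ a, ((G.lapMatrix ℝ).mulVec (xvec Vs κ) a) ^ 2 ≤ 2 * relDeg G (Vs κ) ^ 2 := by
  set A := Vs κ with hA
  set m : ℝ := (A.card : ℝ) with hmdef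
  have hmpos : (0:ℝ) < m := by rw [hmdef]; exact_mod_cast hm
  set s : ℝ := 1 / Real.sqrt m with hsdef
  have hs2 : s ^ 2 = 1 / m := by
    rw [hsdef, div_pow, one_pow, Real.sq_sqrt hmpos.le]
  have hval : ∀ a : Fin N, ((G.lapMatrix ℝ).mulVec (xvec Vs κ)) a
      = if a ∈ A then ((G.neighborFinset a \ A).card : ℝ) * s
        else -(((G.neighborFinset a ∩ A).card : ℝ) * s) := by
    intro a
    rw [SimpleGraph.lapMatrix_mulVec_apply]
    have hs' : (1:ℝ) / Real.sqrt (A.card) = s := by rw [hsdef, hmdef]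
    have hsum : ∑ u ∈ G.neighborFinset a, (if u ∈ A then (1:ℝ) / Real.sqrt (A.card) else 0)
        = ((G.neighborFinset a ∩ A).card : ℝ) * s := by
      rw [Finset.sum_ite_mem, Finset.sum_const, nsmul_eq_mul, hs']
    have hdeg : (G.degree a : ℝ) = ((G.neighborFinset a ∩ A).card : ℝ)
        + ((G.neighborFinset a \ A).card : ℝ) := by
      rw [← Nat.cast_add, Finset.card_inter_add_card_sdiff, SimpleGraph.card_neighborFinset_eq_degree]
    unfold xvec
    rw [← hA]
    split_ifs with ha
    · rw [hsum, hs', hdeg]; ring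
    · rw [hsum]; ring
  have hsplit : ∑ a, ((G.lapMatrix ℝ).mulVec (xvec Vs κ) a) ^ 2
      = ∑ a ∈ A, (((G.neighborFinset a \ A).card : ℝ) * s) ^ 2
        + ∑ a ∈ Aᶜ, (((G.neighborFinset a ∩ A).card : ℝ) * s) ^ 2 := by
    rw [← Finset.sum_add_sum_compl A]
    congr 1
    · refine Finset.sum_congr rfl fun a ha => ?_
      rw [hval a, if_pos ha]
    · refine Finset.sum_congr rfl fun a ha => ?_
      rw [hval a, if_neg (Finset.mem_compl.mp ha), neg_pow]
      ring
  rw [hsplit]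
  have h1 : ∑ a ∈ A, (((G.neighborFinset a \ A).card : ℝ) * s) ^ 2
      ≤ ((cutCard G A : ℝ)) ^ 2 * s ^ 2 := by
    have := sum_sq_le (s := A) (fun a => ((G.neighborFinset a \ A).card : ℝ))
      (fun a _ => by positivity)
    calc ∑ a ∈ A, (((G.neighborFinset a \ A).card : ℝ) * s) ^ 2
        = (∑ a ∈ A, ((G.neighborFinset a \ A).card : ℝ) ^ 2) * s ^ 2 := by
          rw [Finset.sum_mul]; exact Finset.sum_congr rfl fun a _ => by ring
      _ ≤ (∑ a ∈ A, ((G.neighborFinset a \ A).card : ℝ)) ^ 2 * s ^ 2 := by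
          apply mul_le_mul_of_nonneg_right this (by positivity)
      _ = ((cutCard G A : ℝ)) ^ 2 * s ^ 2 := by
          rw [cutCard_eq_out, Nat.cast_sum]
  have h2 : ∑ a ∈ Aᶜ, (((G.neighborFinset a ∩ A).card : ℝ) * s) ^ 2
      ≤ ((cutCard G A : ℝ)) ^ 2 * s ^ 2 := by
    have := sum_sq_le (s := Aᶜ) (fun a => ((G.neighborFinset a ∩ A).card : ℝ))
      (fun a _ => by positivity)
    calc ∑ a ∈ Aᶜ, (((G.neighborFinset a ∩ A).card : ℝ) * s) ^ 2
        = (∑ a ∈ Aᶜ, ((G.neighborFinset a ∩ A).card : ℝ) ^ 2) * s ^ 2 := by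
          rw [Finset.sum_mul]; exact Finset.sum_congr rfl fun a _ => by ring
      _ ≤ (∑ a ∈ Aᶜ, ((G.neighborFinset a ∩ A).card : ℝ)) ^ 2 * s ^ 2 := by
          apply mul_le_mul_of_nonneg_right this (by positivity)
      _ = ((cutCard G A : ℝ)) ^ 2 * s ^ 2 := by
          rw [cutCard_eq_in, Nat.cast_sum]
  have hrel : relDeg G A ^ 2 = (cutCard G A : ℝ) ^ 2 * s ^ 2 := by
    rw [relDeg, div_pow, hs2, ← hmdef]
    rw [Real.sq_sqrt hmpos.le]
    ring
  rw [hrel]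
  linarith
lemma induce_walk_const {V : Type*} (G : SimpleGraph V) (s : Set V) (f : V → ℝ)
    (hadj : ∀ a b, G.Adj a b → f a = f b) :
    ∀ {x y : s} (_ : (G.induce s).Walk x y), f x = f y := by
  intro x y w
  induction w with
  | nil => rfl
  | cons h _ ih => exact (hadj _ _ h).trans ih

lemma mu_nonneg {N : ℕ} (G : SimpleGraph (Fin N)) [DecidableRel G.Adj]
    (μ : Fin N → ℝ) (u : Fin N → Fin N → ℝ)
    (heig : ∀ i, (G.lapMatrix ℝ).mulVec (u i) = μ i • u i)
    (horth : ∀ i j, dotp (u i) (u j) = if i = j then 1 else 0) (i : Fin N) :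
    0 ≤ μ i := by
  have h1 : dotp (u i) ((G.lapMatrix ℝ).mulVec (u i)) = μ i := by
    rw [heig i]
    have : dotp (u i) (μ i • u i) = μ i * dotp (u i) (u i) := by
      unfold dotp
      rw [Finset.mul_sum]
      exact Finset.sum_congr rfl fun a _ => by simp; ring
    rw [this, horth i i, if_pos rfl, mul_one]
  have h2 := (SimpleGraph.posSemidef_lapMatrix ℝ G).dotProduct_mulVec_nonneg (u i)
  rw [← h1]
  simpa [dotProduct, dotp] using h2

lemma mu_q_pos {N q : ℕ} (hqN : q < N) (G : SimpleGraph (Fin N)) [DecidableRel G.Adj]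
    (Vs : Fin q → Finset (Fin N))
    (hdisj : ∀ κ κ' : Fin q, κ ≠ κ' → Disjoint (Vs κ) (Vs κ'))
    (hcover : ∀ v : Fin N, ∃ κ, v ∈ Vs κ)
    (hclconn : ∀ κ, (G.induce (↑(Vs κ) : Set (Fin N))).Connected)
    (μ : Fin N → ℝ) (u : Fin N → Fin N → ℝ)
    (hμmono : Monotone μ)
    (heig : ∀ i, (G.lapMatrix ℝ).mulVec (u i) = μ i • u i)
    (horth : ∀ i j, dotp (u i) (u j) = if i = j then 1 else 0) :
    0 < μ ⟨q, hqN⟩ := by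
  classical
  have hne : ∀ κ, 0 < (Vs κ).card := by
    intro κ
    obtain ⟨⟨a, ha⟩⟩ := (hclconn κ).nonempty
    exact Finset.card_pos.mpr ⟨a, ha⟩
  by_contra hcon
  push_neg at hcon
  have hq1 : q + 1 ≤ N := hqN
  have hker : ∀ j : Fin (q + 1), (G.lapMatrix ℝ).mulVec (u (Fin.castLE hq1 j)) = 0 := by
    intro j
    have hle : (Fin.castLE hq1 j : Fin N) ≤ ⟨q, hqN⟩ := by
      rw [Fin.le_def]
      simpa using Nat.lt_succ_iff.mp j.isLt
    have h0 : μ (Fin.castLE hq1 j) = 0 :=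
      le_antisymm ((hμmono hle).trans hcon) (mu_nonneg G μ u heig horth _)
    rw [heig, h0, zero_smul]
  have hconst : ∀ (j : Fin (q + 1)) (κ : Fin q) (a b : Fin N),
      a ∈ Vs κ → b ∈ Vs κ → u (Fin.castLE hq1 j) a = u (Fin.castLE hq1 j) b := by
    intro j κ a b ha hb
    have hadj : ∀ a b : Fin N, G.Adj a b → u (Fin.castLE hq1 j) a = u (Fin.castLE hq1 j) b := by
      have := (SimpleGraph.lapMatrix_mulVec_eq_zero_iff_forall_adj G
        (x := u (Fin.castLE hq1 j))).mp (by rw [hker j])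
      exact this
    obtain ⟨w⟩ := (hclconn κ).preconnected ⟨a, ha⟩ ⟨b, hb⟩
    exact induce_walk_const G _ _ hadj w
  have hrep : ∀ (j : Fin (q + 1)) (a : Fin N), u (Fin.castLE hq1 j) a
      = ∑ κ, dotp (u (Fin.castLE hq1 j)) (xvec Vs κ) * xvec Vs κ a := by
    intro j a
    obtain ⟨κ₀, ha⟩ := hcover a
    have hm : (0:ℝ) < ((Vs κ₀).card : ℝ) := by exact_mod_cast hne κ₀
    rw [Finset.sum_eq_single κ₀]
    · have h1 : ∀ b ∈ Vs κ₀, u (Fin.castLE hq1 j) b * (1 / Real.sqrt ((Vs κ₀).card))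
          = u (Fin.castLE hq1 j) a * (1 / Real.sqrt ((Vs κ₀).card)) := fun b hb => by
        rw [hconst j κ₀ b a hb ha]
      have hd : dotp (u (Fin.castLE hq1 j)) (xvec Vs κ₀)
          = ((Vs κ₀).card : ℝ) * (u (Fin.castLE hq1 j) a * (1 / Real.sqrt ((Vs κ₀).card))) := by
        unfold dotp xvec
        simp only [mul_ite, mul_zero]
        rw [Finset.sum_ite_mem, Finset.univ_inter, Finset.sum_congr rfl h1,
          Finset.sum_const, nsmul_eq_mul]
      rw [hd]
      unfold xvec
      rw [if_pos ha]
      have hs0 : Real.sqrt ((Vs κ₀).card) ≠ 0 := by positivity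
      have hs : Real.sqrt ((Vs κ₀).card) * Real.sqrt ((Vs κ₀).card) = ((Vs κ₀).card : ℝ) :=
        Real.mul_self_sqrt hm.le
      field_simp
      rw [Real.sq_sqrt hm.le]
    · intro κ _ hκ
      have hna : a ∉ Vs κ := fun hc =>
        (Finset.disjoint_left.mp (hdisj κ κ₀ hκ) hc) ha
      unfold xvec
      rw [if_neg hna, mul_zero]
    · intro h
      exact absurd (Finset.mem_univ κ₀) h
  set M : Matrix (Fin (q+1)) (Fin q) ℝ :=
    Matrix.of (fun j κ => dotp (u (Fin.castLE hq1 j)) (xvec Vs κ)) with hM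
  have hMM : M * Mᵀ = 1 := by
    ext j j'
    have hentry : (M * Mᵀ) j j' = ∑ κ, dotp (u (Fin.castLE hq1 j)) (xvec Vs κ)
        * dotp (u (Fin.castLE hq1 j')) (xvec Vs κ) := by
      simp [Matrix.mul_apply, hM]
    have hexp : dotp (u (Fin.castLE hq1 j)) (u (Fin.castLE hq1 j'))
        = ∑ κ, dotp (u (Fin.castLE hq1 j)) (xvec Vs κ)
          * dotp (u (Fin.castLE hq1 j')) (xvec Vs κ) := by
      calc dotp (u (Fin.castLE hq1 j)) (u (Fin.castLE hq1 j'))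
          = ∑ a, (∑ κ, dotp (u (Fin.castLE hq1 j)) (xvec Vs κ) * xvec Vs κ a)
            * u (Fin.castLE hq1 j') a := by
            show (∑ a, u (Fin.castLE hq1 j) a * u (Fin.castLE hq1 j') a) = _
            exact Finset.sum_congr rfl fun a _ => by rw [hrep j a]
        _ = ∑ a, ∑ κ, dotp (u (Fin.castLE hq1 j)) (xvec Vs κ)
            * (xvec Vs κ a * u (Fin.castLE hq1 j') a) := by
            refine Finset.sum_congr rfl fun a _ => ?_
            rw [Finset.sum_mul]
            exact Finset.sum_congr rfl fun κ _ => by ring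
        _ = ∑ κ, ∑ a, dotp (u (Fin.castLE hq1 j)) (xvec Vs κ)
            * (xvec Vs κ a * u (Fin.castLE hq1 j') a) := Finset.sum_comm
        _ = ∑ κ, dotp (u (Fin.castLE hq1 j)) (xvec Vs κ)
            * dotp (u (Fin.castLE hq1 j')) (xvec Vs κ) := by
            refine Finset.sum_congr rfl fun κ _ => ?_
            rw [← Finset.mul_sum]
            congr 1
            unfold dotp
            exact Finset.sum_congr rfl fun a _ => by ring
    rw [hentry, ← hexp, horth]
    have hinj : (Fin.castLE hq1 j = Fin.castLE hq1 j') ↔ j = j' := Fin.castLE_inj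
    by_cases h : j = j'
    · rw [if_pos (hinj.mpr h), h, Matrix.one_apply_eq]
    · rw [if_neg (fun hc => h (hinj.mp hc)), Matrix.one_apply_ne h]
  have h1 := Matrix.rank_self_mul_transpose M
  rw [hMM, Matrix.rank_one] at h1
  have h2 := M.rank_le_card_width
  rw [← h1] at h2
  simp only [Fintype.card_fin] at h2
  omega

lemma normsq_mulVec {N : ℕ} (G : SimpleGraph (Fin N)) [DecidableRel G.Adj]
    (μ : Fin N → ℝ) (u : Fin N → Fin N → ℝ)
    (heig : ∀ i, (G.lapMatrix ℝ).mulVec (u i) = μ i • u i)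
    (horth : ∀ i j, dotp (u i) (u j) = if i = j then 1 else 0)
    (x : Fin N → ℝ) :
    ∑ i, μ i ^ 2 * dotp x (u i) ^ 2 = ∑ a, ((G.lapMatrix ℝ).mulVec x a) ^ 2 := by
  rw [← parseval u horth ((G.lapMatrix ℝ).mulVec x)]
  refine Finset.sum_congr rfl fun i _ => ?_
  rw [dotp_mulVec_eig G (μ i) (u i) x (heig i)]
  ring

lemma lemA {N q : ℕ} (hqN : q < N) (G : SimpleGraph (Fin N)) [DecidableRel G.Adj]
    (Vs : Fin q → Finset (Fin N))
    (hdisj : ∀ κ κ' : Fin q, κ ≠ κ' → Disjoint (Vs κ) (Vs κ'))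
    (hcover : ∀ v : Fin N, ∃ κ, v ∈ Vs κ)
    (hclconn : ∀ κ, (G.induce (↑(Vs κ) : Set (Fin N))).Connected)
    (μ : Fin N → ℝ) (u : Fin N → Fin N → ℝ)
    (hμmono : Monotone μ)
    (heig : ∀ i, (G.lapMatrix ℝ).mulVec (u i) = μ i • u i)
    (horth : ∀ i j, dotp (u i) (u j) = if i = j then 1 else 0)
    (α : ℝ) (hα : avgRelDeg G Vs ≤ α * μ ⟨q, hqN⟩ / Real.sqrt (2 * q)) :
    0 ≤ α ∧ ∑ κ : Fin q, ∑ i ∈ Finset.univ.filter (fun i : Fin N => q ≤ (i : ℕ)),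
      dotp (xvec Vs κ) (u i) ^ 2 ≤ α ^ 2 := by
  classical
  have hne : ∀ κ, 0 < (Vs κ).card := by
    intro κ
    obtain ⟨⟨a, ha⟩⟩ := (hclconn κ).nonempty
    exact Finset.card_pos.mpr ⟨a, ha⟩
  have hμq := mu_q_pos hqN G Vs hdisj hcover hclconn μ u hμmono heig horth
  have hqpos : (0:ℝ) < q := by
    obtain ⟨κ, _⟩ := hcover ⟨0, lt_of_le_of_lt (Nat.zero_le q) hqN⟩
    exact_mod_cast κ.pos
  have hsq : (0:ℝ) < Real.sqrt (2 * q) := Real.sqrt_pos.mpr (by linarith)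
  have havg0 : (0:ℝ) ≤ avgRelDeg G Vs := Real.sqrt_nonneg _
  have h1 : 0 ≤ α * μ ⟨q, hqN⟩ / Real.sqrt (2 * q) := le_trans havg0 hα
  have h2 : 0 ≤ α * μ ⟨q, hqN⟩ := by
    rwa [le_div_iff₀ hsq, zero_mul] at h1
  have hα0 : 0 ≤ α := by nlinarith
  -- squared realizability
  have hzsum : (0:ℝ) ≤ ∑ κ, relDeg G (Vs κ) ^ 2 :=
    Finset.sum_nonneg fun κ _ => sq_nonneg _
  have hz : (0:ℝ) ≤ (1 / (q:ℝ)) * ∑ κ, relDeg G (Vs κ) ^ 2 := by positivity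
  have h3 : (1 / (q:ℝ)) * ∑ κ, relDeg G (Vs κ) ^ 2
      ≤ α ^ 2 * μ ⟨q, hqN⟩ ^ 2 / (2 * q) := by
    have hp := pow_le_pow_left₀ havg0 hα 2
    rw [avgRelDeg, Real.sq_sqrt hz] at hp
    calc (1 / (q:ℝ)) * ∑ κ, relDeg G (Vs κ) ^ 2
        ≤ (α * μ ⟨q, hqN⟩ / Real.sqrt (2 * q)) ^ 2 := hp
      _ = α ^ 2 * μ ⟨q, hqN⟩ ^ 2 / (2 * q) := by
          rw [div_pow, Real.sq_sqrt (by linarith : (0:ℝ) ≤ 2 * q)]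
          ring
  have hβ : ∑ κ, relDeg G (Vs κ) ^ 2 ≤ α ^ 2 * μ ⟨q, hqN⟩ ^ 2 / 2 := by
    have h4 := mul_le_mul_of_nonneg_left h3 hqpos.le
    have h5 : (q:ℝ) * ((1 / (q:ℝ)) * ∑ κ, relDeg G (Vs κ) ^ 2)
        = ∑ κ, relDeg G (Vs κ) ^ 2 := by field_simp
    have h6 : (q:ℝ) * (α ^ 2 * μ ⟨q, hqN⟩ ^ 2 / (2 * q))
        = α ^ 2 * μ ⟨q, hqN⟩ ^ 2 / 2 := by field_simp
    linarith
  -- per cluster bound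
  have hkey : ∀ κ : Fin q, μ ⟨q, hqN⟩ ^ 2 *
      ∑ i ∈ Finset.univ.filter (fun i : Fin N => q ≤ (i : ℕ)), dotp (xvec Vs κ) (u i) ^ 2
      ≤ 2 * relDeg G (Vs κ) ^ 2 := by
    intro κ
    have hstep1 : μ ⟨q, hqN⟩ ^ 2 *
        ∑ i ∈ Finset.univ.filter (fun i : Fin N => q ≤ (i : ℕ)), dotp (xvec Vs κ) (u i) ^ 2
        ≤ ∑ i ∈ Finset.univ.filter (fun i : Fin N => q ≤ (i : ℕ)),
          μ i ^ 2 * dotp (xvec Vs κ) (u i) ^ 2 := by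
      rw [Finset.mul_sum]
      refine Finset.sum_le_sum fun i hi => ?_
      have hqi : (⟨q, hqN⟩ : Fin N) ≤ i := by
        rw [Fin.le_def]
        exact (Finset.mem_filter.mp hi).2
      have hμi : μ ⟨q, hqN⟩ ≤ μ i := hμmono hqi
      exact mul_le_mul_of_nonneg_right (pow_le_pow_left₀ hμq.le hμi 2) (sq_nonneg _)
    have hstep2 : ∑ i ∈ Finset.univ.filter (fun i : Fin N => q ≤ (i : ℕ)),
        μ i ^ 2 * dotp (xvec Vs κ) (u i) ^ 2
        ≤ ∑ i, μ i ^ 2 * dotp (xvec Vs κ) (u i) ^ 2 :=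
      Finset.sum_le_sum_of_subset_of_nonneg (Finset.filter_subset _ _)
        (fun i _ _ => by positivity)
    have hstep3 := lap_xvec_bound G Vs κ (hne κ)
    rw [normsq_mulVec G μ u heig horth (xvec Vs κ)] at hstep2
    linarith
  refine ⟨hα0, ?_⟩
  have htot : μ ⟨q, hqN⟩ ^ 2 * ∑ κ : Fin q,
      ∑ i ∈ Finset.univ.filter (fun i : Fin N => q ≤ (i : ℕ)), dotp (xvec Vs κ) (u i) ^ 2
      ≤ α ^ 2 * μ ⟨q, hqN⟩ ^ 2 := by
    rw [Finset.mul_sum]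
    calc ∑ κ, μ ⟨q, hqN⟩ ^ 2 *
        ∑ i ∈ Finset.univ.filter (fun i : Fin N => q ≤ (i : ℕ)), dotp (xvec Vs κ) (u i) ^ 2
        ≤ ∑ κ, 2 * relDeg G (Vs κ) ^ 2 := Finset.sum_le_sum fun κ _ => hkey κ
      _ = 2 * ∑ κ, relDeg G (Vs κ) ^ 2 := by rw [Finset.mul_sum]
      _ ≤ 2 * (α ^ 2 * μ ⟨q, hqN⟩ ^ 2 / 2) := by linarith
      _ = α ^ 2 * μ ⟨q, hqN⟩ ^ 2 := by ring
  have hμ2 : (0:ℝ) < μ ⟨q, hqN⟩ ^ 2 := by positivity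
  nlinarith [htot, hμ2]

lemma gram_sum {N q : ℕ} (v w : Fin q → Fin N → ℝ) :
    ∑ a, ∑ b, (∑ κ, v κ a * v κ b) * (∑ j, w j a * w j b)
      = ∑ κ, ∑ j, dotp (v κ) (w j) ^ 2 := by
  classical
  set V : Matrix (Fin q) (Fin N) ℝ := Matrix.of v with hV
  set W : Matrix (Fin q) (Fin N) ℝ := Matrix.of w with hW
  have hL : ∑ a, ∑ b, (∑ κ, v κ a * v κ b) * (∑ j, w j a * w j b)
      = Matrix.trace (Vᵀ * V * (Wᵀ * W)) := by
    simp only [Matrix.trace, Matrix.diag, Matrix.mul_apply, Matrix.transpose_apply,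
      hV, hW, Matrix.of_apply]
    refine Finset.sum_congr rfl fun a _ => ?_
    refine Finset.sum_congr rfl fun b _ => ?_
    congr 1
    exact Finset.sum_congr rfl fun j _ => mul_comm _ _
  have hR : ∑ κ, ∑ j, dotp (v κ) (w j) ^ 2
      = Matrix.trace (V * Wᵀ * (W * Vᵀ)) := by
    simp only [Matrix.trace, Matrix.diag, Matrix.mul_apply, Matrix.transpose_apply,
      hV, hW, Matrix.of_apply]
    refine Finset.sum_congr rfl fun κ _ => ?_
    refine Finset.sum_congr rfl fun j _ => ?_
    rw [pow_two]
    unfold dotp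
    congr 1
    exact Finset.sum_congr rfl fun b _ => mul_comm _ _
  rw [hL, hR]
  calc Matrix.trace (Vᵀ * V * (Wᵀ * W))
      = Matrix.trace (Vᵀ * (V * Wᵀ * W)) := by
        rw [Matrix.mul_assoc, Matrix.mul_assoc]
    _ = Matrix.trace (V * Wᵀ * W * Vᵀ) := Matrix.trace_mul_comm _ _
    _ = Matrix.trace (V * Wᵀ * (W * Vᵀ)) := by rw [Matrix.mul_assoc]

noncomputable def frob {N q : ℕ} (v w : Fin q → Fin N → ℝ) : ℝ :=
  Real.sqrt (∑ a, ∑ b, ((∑ κ, v κ a * v κ b) - (∑ κ, w κ a * w κ b)) ^ 2)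

lemma frob_comm {N q : ℕ} (v w : Fin q → Fin N → ℝ) : frob v w = frob w v := by
  unfold frob
  congr 1
  refine Finset.sum_congr rfl fun a _ => Finset.sum_congr rfl fun b _ => by ring

lemma frob_triangle {N q : ℕ} (v w z : Fin q → Fin N → ℝ) :
    frob v w ≤ frob v z + frob z w := by
  classical
  let P : (Fin q → Fin N → ℝ) → EuclideanSpace ℝ (Fin N × Fin N) :=
    fun v => WithLp.toLp 2 (fun p : Fin N × Fin N => ∑ κ, v κ p.1 * v κ p.2)
  have hdist : ∀ v w : Fin q → Fin N → ℝ, frob v w = dist (P v) (P w) := by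
    intro v w
    rw [EuclideanSpace.dist_eq]
    unfold frob
    congr 1
    rw [Fintype.sum_prod_type]
    refine Finset.sum_congr rfl fun a _ => Finset.sum_congr rfl fun b _ => ?_
    rw [Real.dist_eq, sq_abs]
  rw [hdist, hdist, hdist]
  exact dist_triangle _ _ _

lemma frob_sq {N q : ℕ} (v w : Fin q → Fin N → ℝ)
    (hv : ∀ κ κ', dotp (v κ) (v κ') = if κ = κ' then 1 else 0)
    (hw : ∀ κ κ', dotp (w κ) (w κ') = if κ = κ' then 1 else 0) :
    frob v w = Real.sqrt (2 * ((q : ℝ) - ∑ κ, ∑ j, dotp (v κ) (w j) ^ 2)) := by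
  have collapse : ∀ f : Fin N → Fin N → ℝ, (∑ a, ∑ b, f a b) = ∑ p : Fin N × Fin N, f p.1 p.2 :=
    fun f => (Fintype.sum_prod_type (f := fun p : Fin N × Fin N => f p.1 p.2)).symm
  have horthsum : ∀ (z : Fin q → Fin N → ℝ),
      (∀ κ κ', dotp (z κ) (z κ') = if κ = κ' then 1 else 0) →
      ∑ κ : Fin q, ∑ j : Fin q, dotp (z κ) (z j) ^ 2 = (q : ℝ) := by
    intro z hz
    rw [Finset.sum_congr rfl fun κ _ => Finset.sum_congr rfl fun j _ => by rw [hz κ j]]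
    simp [Finset.sum_ite_eq]
  unfold frob
  congr 1
  rw [collapse (fun a b => ((∑ κ, v κ a * v κ b) - (∑ κ, w κ a * w κ b)) ^ 2)]
  have expand : (∑ p : Fin N × Fin N, ((∑ κ, v κ p.1 * v κ p.2) - (∑ κ, w κ p.1 * w κ p.2)) ^ 2)
      = (∑ p : Fin N × Fin N, (∑ κ, v κ p.1 * v κ p.2) * (∑ j, v j p.1 * v j p.2))
        - 2 * (∑ p : Fin N × Fin N, (∑ κ, v κ p.1 * v κ p.2) * (∑ j, w j p.1 * w j p.2))
        + (∑ p : Fin N × Fin N, (∑ κ, w κ p.1 * w κ p.2) * (∑ j, w j p.1 * w j p.2)) := by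
    rw [Finset.mul_sum, ← Finset.sum_sub_distrib, ← Finset.sum_add_distrib]
    exact Finset.sum_congr rfl fun p _ => by ring
  rw [expand,
    ← collapse (fun a b => (∑ κ, v κ a * v κ b) * (∑ j, v j a * v j b)),
    ← collapse (fun a b => (∑ κ, v κ a * v κ b) * (∑ j, w j a * w j b)),
    ← collapse (fun a b => (∑ κ, w κ a * w κ b) * (∑ j, w j a * w j b)),
    gram_sum v v, gram_sum v w, gram_sum w w, horthsum v hv, horthsum w hw]
  ring

lemma sum_filter_lt {N q : ℕ} (hqN : q ≤ N) (f : Fin N → ℝ) :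
    ∑ i ∈ Finset.univ.filter (fun i : Fin N => ¬ q ≤ (i : ℕ)), f i
      = ∑ j : Fin q, f (Fin.castLE hqN j) := by
  refine Finset.sum_bij'
    (i := fun i hi => (⟨(i : ℕ), by
      have := (Finset.mem_filter.mp hi).2
      omega⟩ : Fin q))
    (j := fun j _ => Fin.castLE hqN j) ?_ ?_ ?_ ?_ ?_
  · intro a ha; exact Finset.mem_univ _
  · intro a ha
    refine Finset.mem_filter.mpr ⟨Finset.mem_univ _, ?_⟩
    show ¬ q ≤ ((Fin.castLE hqN a : Fin N) : ℕ)
    have h1 : ((Fin.castLE hqN a : Fin N) : ℕ) = (a : ℕ) := rfl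
    have h2 := a.isLt
    omega
  · intro a ha; rfl
  · intro a ha; rfl
  · intro a ha; rfl

lemma sum_tail {N q : ℕ} (hqN : q < N) (u : Fin N → Fin N → ℝ)
    (horth : ∀ i j, dotp (u i) (u j) = if i = j then 1 else 0)
    (y : Fin N → ℝ) (hy : dotp y y = 1) :
    ∑ i ∈ Finset.univ.filter (fun i : Fin N => q ≤ (i : ℕ)), dotp y (u i) ^ 2
      = 1 - ∑ j : Fin q, dotp y (u (Fin.castLE hqN.le j)) ^ 2 := by
  have hp := parseval u horth y
  have h1 : ∑ a, y a ^ 2 = 1 := by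
    rw [← hy]
    exact Finset.sum_congr rfl fun a _ => by rw [pow_two]
  rw [h1] at hp
  rw [← Finset.sum_filter_add_sum_filter_not Finset.univ (fun i : Fin N => q ≤ (i : ℕ))
    (fun i => dotp y (u i) ^ 2)] at hp
  rw [sum_filter_lt hqN.le (fun i => dotp y (u i) ^ 2)] at hp
  linarith

/-- Proposition 1: Let `G` be a connected simple graph on `N` vertices that
admits an `α`-realizable `q`-partition into connected clusters `G_0, …, G_{q−1}`. Let `G'`
be obtained from `G` by deleting only intra-cluster edges, and suppose the induced
subgraphs of `G'` on the same vertex sets are connected and form an `α'`-realizable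
`q`-partition of `G'`. If `u_0, …, u_{N−1}` and `u'_0, …, u'_{N−1}` are orthonormal
eigenbases of the Laplacians of `G` and `G'` ordered by increasing eigenvalue, then
`√(∑_{κ=0}^{q−1} ∑_{i=q}^{N−1} |u_κᵀ u'_i|²) ≤ α + α'`. -/
theorem eigenvector_subspace_perturbation_bound {N q : ℕ} (hqN : q < N)
    (G G' : SimpleGraph (Fin N)) [DecidableRel G.Adj] [DecidableRel G'.Adj]
    (hconn : G.Connected)
    (Vs : Fin q → Finset (Fin N))
    (hdisj : ∀ κ κ' : Fin q, κ ≠ κ' → Disjoint (Vs κ) (Vs κ'))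
    (hcover : ∀ v : Fin N, ∃ κ, v ∈ Vs κ)
    (hGclconn : ∀ κ, (G.induce (↑(Vs κ) : Set (Fin N))).Connected)
    (hsub : G' ≤ G)
    (hintra : ∀ a c : Fin N, G.Adj a c → ¬G'.Adj a c → ∃ κ, a ∈ Vs κ ∧ c ∈ Vs κ)
    (hG'clconn : ∀ κ, (G'.induce (↑(Vs κ) : Set (Fin N))).Connected)
    (μ μ' : Fin N → ℝ) (u u' : Fin N → Fin N → ℝ)
    (hμmono : Monotone μ) (hμ'mono : Monotone μ')
    (heig : ∀ i, (G.lapMatrix ℝ).mulVec (u i) = μ i • u i)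
    (heig' : ∀ i, (G'.lapMatrix ℝ).mulVec (u' i) = μ' i • u' i)
    (horth : ∀ i j, dotp (u i) (u j) = if i = j then 1 else 0)
    (horth' : ∀ i j, dotp (u' i) (u' j) = if i = j then 1 else 0)
    (α α' : ℝ)
    (hα : avgRelDeg G Vs ≤ α * μ ⟨q, hqN⟩ / Real.sqrt (2 * q))
    (hα' : avgRelDeg G' Vs ≤ α' * μ' ⟨q, hqN⟩ / Real.sqrt (2 * q)) :
    Real.sqrt (∑ κ : Fin q, ∑ i ∈ Finset.univ.filter (fun i : Fin N => q ≤ (i : ℕ)),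
        dotp (u (Fin.castLE hqN.le κ)) (u' i) ^ 2) ≤ α + α' := by
  classical
  have hne : ∀ κ, 0 < (Vs κ).card := by
    intro κ
    obtain ⟨⟨a, ha⟩⟩ := (hGclconn κ).nonempty
    exact Finset.card_pos.mpr ⟨a, ha⟩
  obtain ⟨hα0, hS1⟩ := lemA hqN G Vs hdisj hcover hGclconn μ u hμmono heig horth α hα
  obtain ⟨hα'0, hS2⟩ := lemA hqN G' Vs hdisj hcover hG'clconn μ' u' hμ'mono heig' horth' α' hα'
  -- orthonormal truncated families
  set x : Fin q → Fin N → ℝ := xvec Vs with hxdef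
  have hxorth : ∀ κ κ', dotp (x κ) (x κ') = if κ = κ' then 1 else 0 :=
    fun κ κ' => xvec_orth Vs hdisj hne κ κ'
  have htrunc : ∀ (w : Fin N → Fin N → ℝ),
      (∀ i j, dotp (w i) (w j) = if i = j then 1 else 0) →
      ∀ κ κ' : Fin q, dotp (w (Fin.castLE hqN.le κ)) (w (Fin.castLE hqN.le κ'))
        = if κ = κ' then 1 else 0 := by
    intro w hw κ κ'
    rw [hw]
    by_cases h : κ = κ'
    · rw [if_pos (by rw [h]), if_pos h]
    · rw [if_neg (fun hc => h (Fin.castLE_inj.mp hc)), if_neg h]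
  have hu0orth := htrunc u horth
  have hu0'orth := htrunc u' horth'
  -- tail-sum identities
  have hTid : ∀ (v : Fin q → Fin N → ℝ) (w : Fin N → Fin N → ℝ),
      (∀ κ κ', dotp (v κ) (v κ') = if κ = κ' then 1 else 0) →
      (∀ i j, dotp (w i) (w j) = if i = j then 1 else 0) →
      ∑ κ : Fin q, ∑ i ∈ Finset.univ.filter (fun i : Fin N => q ≤ (i : ℕ)),
        dotp (v κ) (w i) ^ 2
      = (q : ℝ) - ∑ κ : Fin q, ∑ j : Fin q, dotp (v κ) (w (Fin.castLE hqN.le j)) ^ 2 := by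
    intro v w hv hw
    rw [Finset.sum_congr rfl fun κ _ => sum_tail hqN w hw (v κ)
      (by rw [hv κ κ, if_pos rfl])]
    rw [Finset.sum_sub_distrib, Finset.sum_const, Finset.card_univ, Fintype.card_fin,
      nsmul_eq_mul, mul_one]
  have hT0 := hTid (fun κ => u (Fin.castLE hqN.le κ)) u' hu0orth horth'
  have hT1 := hTid x u hxorth horth
  have hT2 := hTid x u' hxorth horth'
  -- nonnegativity of tail sums
  have hnn : ∀ (v : Fin q → Fin N → ℝ) (w : Fin N → Fin N → ℝ),
      (0:ℝ) ≤ ∑ κ : Fin q, ∑ i ∈ Finset.univ.filter (fun i : Fin N => q ≤ (i : ℕ)),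
        dotp (v κ) (w i) ^ 2 :=
    fun v w => Finset.sum_nonneg fun κ _ => Finset.sum_nonneg fun i _ => sq_nonneg _
  -- frobenius comparisons
  have hf0 := frob_sq (fun κ => u (Fin.castLE hqN.le κ)) (fun κ => u' (Fin.castLE hqN.le κ))
    hu0orth hu0'orth
  have hf1 := frob_sq x (fun κ => u (Fin.castLE hqN.le κ)) hxorth hu0orth
  have hf2 := frob_sq x (fun κ => u' (Fin.castLE hqN.le κ)) hxorth hu0'orth
  have htri : frob (fun κ => u (Fin.castLE hqN.le κ)) (fun κ => u' (Fin.castLE hqN.le κ))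
      ≤ frob x (fun κ => u (Fin.castLE hqN.le κ)) + frob x (fun κ => u' (Fin.castLE hqN.le κ)) := by
    calc frob (fun κ => u (Fin.castLE hqN.le κ)) (fun κ => u' (Fin.castLE hqN.le κ))
        ≤ frob (fun κ => u (Fin.castLE hqN.le κ)) x
          + frob x (fun κ => u' (Fin.castLE hqN.le κ)) := frob_triangle _ _ _
      _ = _ := by rw [frob_comm]
  rw [hf0, hf1, hf2] at htri
  rw [← hT0, ← hT1, ← hT2] at htri
  -- abbreviate the three tail sums
  set S0 := ∑ κ : Fin q, ∑ i ∈ Finset.univ.filter (fun i : Fin N => q ≤ (i : ℕ)),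
    dotp (u (Fin.castLE hqN.le κ)) (u' i) ^ 2 with hS0def
  have hs2 : Real.sqrt 2 > 0 := by positivity
  have hsplit : ∀ z : ℝ, 0 ≤ z → Real.sqrt (2 * z) = Real.sqrt 2 * Real.sqrt z :=
    fun z hz => Real.sqrt_mul (by norm_num) z
  rw [hsplit _ (hnn _ _), hsplit _ (hnn _ _), hsplit _ (hnn _ _)] at htri
  have hkey : Real.sqrt S0 ≤ Real.sqrt (∑ κ : Fin q,
      ∑ i ∈ Finset.univ.filter (fun i : Fin N => q ≤ (i : ℕ)), dotp (x κ) (u i) ^ 2)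
      + Real.sqrt (∑ κ : Fin q,
      ∑ i ∈ Finset.univ.filter (fun i : Fin N => q ≤ (i : ℕ)), dotp (x κ) (u' i) ^ 2) := by
    have := htri
    nlinarith [Real.sqrt_nonneg S0, Real.sqrt_nonneg 2]
  refine hkey.trans ?_
  have hb1 : Real.sqrt (∑ κ : Fin q,
      ∑ i ∈ Finset.univ.filter (fun i : Fin N => q ≤ (i : ℕ)), dotp (x κ) (u i) ^ 2) ≤ α := by
    rw [hxdef]
    calc Real.sqrt _ ≤ Real.sqrt (α ^ 2) := Real.sqrt_le_sqrt hS1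
      _ = α := Real.sqrt_sq hα0
  have hb2 : Real.sqrt (∑ κ : Fin q,
      ∑ i ∈ Finset.univ.filter (fun i : Fin N => q ≤ (i : ℕ)), dotp (x κ) (u' i) ^ 2) ≤ α' := by
    rw [hxdef]
    calc Real.sqrt _ ≤ Real.sqrt (α' ^ 2) := Real.sqrt_le_sqrt hS2
      _ = α' := Real.sqrt_sq hα'0
  linarith
end

section
/- For q-dimensional linear subspaces U, W of ℝ^N, define d_sp(U, W) = √(Σ_{κ=0}^{q−1} Σ_{i=q}^{N−1} |w_κᵀ z_i|²), where w_0, …, w_{q−1} is an orthonormal basis of U and z_q, …, z_{N−1} is an orthonormal basis of the orthogonal complement of W. Then d_sp(U, W) is well-defined (independent of the chosen orthonormal bases), d_sp(U, W) = d_sp(W, U) for all q-dimensional subspaces U, W, and d_sp satisfies the triangle inequality: d_sp(U, W) ≤ d_sp(U, Y) + d_sp(Y, W) for all q-dimensional subspaces U, W, Y of ℝ^N. -/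
/-- The quantity `√(∑_κ ∑_i ⟪w_κ, z_i⟫²)` computed from a family `w` (an orthonormal basis
of a subspace `U`) and a family `z` (an orthonormal basis of the orthogonal complement of a
subspace `W`). -/
noncomputable def dspVal {N q r : ℕ} (w : Fin q → EuclideanSpace ℝ (Fin N))
    (z : Fin r → EuclideanSpace ℝ (Fin N)) : ℝ :=
  Real.sqrt (∑ κ, ∑ i, (inner ℝ (w κ) (z i) : ℝ) ^ 2)

/-- `w` is an orthonormal basis of the subspace `U`. -/
def IsONBasisOf {N q : ℕ} (w : Fin q → EuclideanSpace ℝ (Fin N))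
    (U : Submodule ℝ (EuclideanSpace ℝ (Fin N))) : Prop :=
  Orthonormal ℝ w ∧ Submodule.span ℝ (Set.range w) = U


section DspAux

open Submodule Module

variable {N q r : ℕ}

local notation "E" N => EuclideanSpace ℝ (Fin N)

lemma IsONBasisOf.mem {w : Fin q → E N} {U : Submodule ℝ (E N)} (hw : IsONBasisOf w U)
    (κ : Fin q) : w κ ∈ U :=
  hw.2 ▸ Submodule.subset_span (Set.mem_range_self κ)

lemma IsONBasisOf.exists_onb {w : Fin q → E N} {U : Submodule ℝ (E N)} (hw : IsONBasisOf w U) :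
    ∃ b : OrthonormalBasis (Fin q) ℝ U, ∀ κ, (b κ : E N) = w κ := by
  set w' : Fin q → U := Set.codRestrict w U hw.mem with hw'
  have hon : Orthonormal ℝ w' := hw.1.codRestrict U hw.mem
  have hsp : ⊤ ≤ Submodule.span ℝ (Set.range w') := by
    have h1 : Submodule.map U.subtype (Submodule.span ℝ (Set.range w')) = U := by
      rw [← Submodule.span_image]
      have : U.subtype '' Set.range w' = Set.range w := by
        ext x; simp [hw', Set.codRestrict]
      rw [this, hw.2]
    intro x _
    have hx : (x : E N) ∈ Submodule.map U.subtype (Submodule.span ℝ (Set.range w')) := by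
      rw [h1]; exact x.2
    obtain ⟨y, hy, hyx⟩ := hx
    have : y = x := Subtype.ext hyx
    rwa [← this]
  exact ⟨OrthonormalBasis.mk hon hsp, fun κ => by simp [OrthonormalBasis.coe_mk, hw', Set.codRestrict]⟩

lemma IsONBasisOf.proj_sum {w : Fin q → E N} {U : Submodule ℝ (E N)} (hw : IsONBasisOf w U)
    (x : E N) :
    ((orthogonalProjection U x : E N)) = ∑ κ, (inner ℝ (w κ) x : ℝ) • w κ := by
  obtain ⟨b, hb⟩ := hw.exists_onb
  rw [b.orthogonalProjection_apply_eq_sum x]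
  push_cast
  simp_rw [hb]

lemma IsONBasisOf.parseval {w : Fin q → E N} {U : Submodule ℝ (E N)} (hw : IsONBasisOf w U)
    (x : E N) :
    ∑ κ, (inner ℝ x (w κ) : ℝ) ^ 2 = ‖(orthogonalProjection U x : E N)‖ ^ 2 := by
  have h0 : (inner ℝ x ((orthogonalProjection U x : E N)) : ℝ)
      = ‖(orthogonalProjection U x : E N)‖ ^ 2 := by
    have hmem : x - (orthogonalProjection U x : E N) ∈ Uᗮ :=
      U.sub_starProjection_mem_orthogonal x
    have hz : (inner ℝ ((orthogonalProjection U x : E N))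
        (x - (orthogonalProjection U x : E N)) : ℝ) = 0 :=
      hmem _ (orthogonalProjection U x).2
    rw [inner_sub_right, sub_eq_zero] at hz
    rw [real_inner_comm] at hz
    rw [hz, real_inner_self_eq_norm_sq]
  rw [← h0, hw.proj_sum, inner_sum]
  simp_rw [real_inner_smul_right, sq, real_inner_comm (w _) x]

lemma exists_isONBasisOf {V : Submodule ℝ (E N)} (hV : Module.finrank ℝ V = q) :
    ∃ v : Fin q → E N, IsONBasisOf v V := by
  let b := (stdOrthonormalBasis ℝ V).reindex (finCongr hV)
  refine ⟨fun j => (b j : E N), V.subtypeₗᵢ.orthonormal_comp_iff.mpr b.orthonormal, ?_⟩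
  have h1 : Set.range (fun j => (b j : E N)) = V.subtype '' Set.range b := by
    rw [← Set.range_comp]; rfl
  rw [h1, Submodule.span_image, ← OrthonormalBasis.coe_toBasis b, b.toBasis.span_eq,
    Submodule.map_top, Submodule.range_subtype]

noncomputable def mMat {N : ℕ} (V : Submodule ℝ (EuclideanSpace ℝ (Fin N))) :
    EuclideanSpace ℝ (Fin N × Fin N) :=
  WithLp.toLp 2 (fun p : Fin N × Fin N => (orthogonalProjection V (EuclideanSpace.single p.2 (1:ℝ)) : EuclideanSpace ℝ (Fin N)) p.1)

lemma mMat_apply {V : Submodule ℝ (E N)} {v : Fin q → E N} (hv : IsONBasisOf v V)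
    (a b : Fin N) : mMat V (a, b) = ∑ k, v k b * v k a := by
  show ((orthogonalProjection V (EuclideanSpace.single b (1:ℝ)) : E N)) a = _
  rw [hv.proj_sum]
  rw [WithLp.ofLp_sum, Finset.sum_apply]
  congr 1; ext k
  rw [PiLp.smul_apply, smul_eq_mul]
  congr 1
  rw [real_inner_comm, EuclideanSpace.inner_single_left]
  simp

lemma sum4_comm {α β γ δ : Type*} [Fintype α] [Fintype β] [Fintype γ] [Fintype δ]
    (f : α → β → γ → δ → ℝ) :
    ∑ a, ∑ b, ∑ k, ∑ j, f a b k j = ∑ k, ∑ j, ∑ a, ∑ b, f a b k j :=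
  calc ∑ a, ∑ b, ∑ k, ∑ j, f a b k j
      = ∑ a, ∑ k, ∑ b, ∑ j, f a b k j :=
        Finset.sum_congr rfl fun a _ => Finset.sum_comm
    _ = ∑ k, ∑ a, ∑ b, ∑ j, f a b k j := Finset.sum_comm
    _ = ∑ k, ∑ a, ∑ j, ∑ b, f a b k j :=
        Finset.sum_congr rfl fun k _ => Finset.sum_congr rfl fun a _ => Finset.sum_comm
    _ = ∑ k, ∑ j, ∑ a, ∑ b, f a b k j :=
        Finset.sum_congr rfl fun k _ => Finset.sum_comm

lemma mMat_inner {V V' : Submodule ℝ (E N)} {v : Fin q → E N} {v' : Fin r → E N}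
    (hv : IsONBasisOf v V) (hv' : IsONBasisOf v' V') :
    (inner ℝ (mMat V) (mMat V') : ℝ) = ∑ k, ∑ j, (inner ℝ (v k) (v' j) : ℝ) ^ 2 := by
  rw [PiLp.inner_apply]
  simp only [RCLike.inner_apply, conj_trivial]
  rw [Fintype.sum_prod_type]
  simp_rw [mul_comm ((mMat V').ofLp _) ((mMat V).ofLp _)]
  calc ∑ a, ∑ b, mMat V (a, b) * mMat V' (a, b)
      = ∑ a, ∑ b, (∑ k, v k b * v k a) * (∑ j, v' j b * v' j a) := by
        simp_rw [mMat_apply hv, mMat_apply hv']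
    _ = ∑ a, ∑ b, ∑ k, ∑ j, (v k b * v k a) * (v' j b * v' j a) := by
        simp_rw [Finset.sum_mul_sum]
    _ = ∑ k, ∑ j, ∑ a, ∑ b, (v k b * v k a) * (v' j b * v' j a) := sum4_comm _
    _ = ∑ k, ∑ j, (∑ a, v k a * v' j a) * (∑ b, v k b * v' j b) := by
        simp_rw [Finset.sum_mul_sum]
        refine Finset.sum_congr rfl fun k _ => Finset.sum_congr rfl fun j _ => ?_
        rw [Finset.sum_comm]
        exact Finset.sum_congr rfl fun a _ => Finset.sum_congr rfl fun b _ => by ring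
    _ = ∑ k, ∑ j, (inner ℝ (v k) (v' j) : ℝ) ^ 2 := by
        refine Finset.sum_congr rfl fun k _ => Finset.sum_congr rfl fun j _ => ?_
        rw [PiLp.inner_apply]
        simp only [RCLike.inner_apply, conj_trivial]
        simp_rw [mul_comm ((v' j).ofLp _) ((v k).ofLp _)]
        ring

lemma mMat_inner_self {V : Submodule ℝ (E N)} {v : Fin q → E N} (hv : IsONBasisOf v V) :
    (inner ℝ (mMat V) (mMat V) : ℝ) = q := by
  rw [mMat_inner hv hv]
  have h := hv.1
  rw [orthonormal_iff_ite] at h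
  simp [h, Finset.sum_ite_eq]

lemma dspVal_eq_norm {U W : Submodule ℝ (E N)} (hW : Module.finrank ℝ W = q)
    {w : Fin q → E N} {z : Fin r → E N} (hw : IsONBasisOf w U) (hz : IsONBasisOf z Wᗮ) :
    dspVal w z = ‖mMat U - mMat W‖ / Real.sqrt 2 := by
  obtain ⟨w₂, hw₂⟩ := exists_isONBasisOf hW
  -- S = q - T where T = ∑ₖ∑ⱼ ⟪w k, w₂ j⟫²
  have hS : ∑ κ, ∑ i, (inner ℝ (w κ) (z i) : ℝ) ^ 2
      = q - ∑ k, ∑ j, (inner ℝ (w k) (w₂ j) : ℝ) ^ 2 := by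
    have h1 : ∀ κ, ∑ i, (inner ℝ (w κ) (z i) : ℝ) ^ 2
        = 1 - ∑ j, (inner ℝ (w κ) (w₂ j) : ℝ) ^ 2 := by
      intro κ
      rw [hz.parseval (w κ), hw₂.parseval (w κ)]
      have h2 := norm_sq_eq_add_norm_sq_projection (w κ) W
      have h3 : ‖w κ‖ = 1 := hw.1.1 κ
      have h4 : ∀ (V : Submodule ℝ (E N)) (x : E N),
          ‖orthogonalProjection V x‖ = ‖(orthogonalProjection V x : E N)‖ := fun V x => rfl
      rw [h3, h4, h4] at h2
      simp only [one_pow] at h2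
      linarith
    simp_rw [h1, Finset.sum_sub_distrib, Finset.sum_const, Finset.card_univ, Fintype.card_fin,
      nsmul_eq_mul, mul_one]
  -- ‖mMat U - mMat W‖² = 2 * S
  have hN : ‖mMat U - mMat W‖ ^ 2
      = 2 * (q - ∑ k, ∑ j, (inner ℝ (w k) (w₂ j) : ℝ) ^ 2) := by
    rw [norm_sub_sq_real, ← real_inner_self_eq_norm_sq (mMat U),
      ← real_inner_self_eq_norm_sq (mMat W),
      mMat_inner_self hw, mMat_inner_self hw₂, mMat_inner hw hw₂]
    ring
  rw [dspVal, hS]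
  have h5 : (q : ℝ) - ∑ k, ∑ j, (inner ℝ (w k) (w₂ j) : ℝ) ^ 2 = ‖mMat U - mMat W‖ ^ 2 / 2 := by
    linarith
  rw [h5, Real.sqrt_div (sq_nonneg _), Real.sqrt_sq (norm_nonneg _)]



end DspAux

/-- For `q`-dimensional subspaces `U, W` of `ℝ^N`, define
`d_sp(U, W) = √(∑_{κ=0}^{q−1} ∑_{i=q}^{N−1} |w_κᵀ z_i|²)` where `w_0,…,w_{q−1}` is an
orthonormal basis of `U` and `z_q,…,z_{N−1}` an orthonormal basis of `Wᗮ`. Then `d_sp` is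
well-defined (independent of the chosen orthonormal bases), symmetric, and satisfies the
triangle inequality on `q`-dimensional subspaces of `ℝ^N`. -/

theorem dsp_wellDefined_symm_triangle {N q : ℕ} (hq : q ≤ N) :
    -- well-definedness: independence of the chosen orthonormal bases
    (∀ U W : Submodule ℝ (EuclideanSpace ℝ (Fin N)),
      Module.finrank ℝ U = q → Module.finrank ℝ W = q →
      ∀ (w w' : Fin q → EuclideanSpace ℝ (Fin N))
        (z z' : Fin (N - q) → EuclideanSpace ℝ (Fin N)),
        IsONBasisOf w U → IsONBasisOf w' U → IsONBasisOf z Wᗮ → IsONBasisOf z' Wᗮ →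
        dspVal w z = dspVal w' z') ∧
    -- symmetry: d_sp(U, W) = d_sp(W, U)
    (∀ U W : Submodule ℝ (EuclideanSpace ℝ (Fin N)),
      Module.finrank ℝ U = q → Module.finrank ℝ W = q →
      ∀ (w : Fin q → EuclideanSpace ℝ (Fin N))
        (z : Fin (N - q) → EuclideanSpace ℝ (Fin N))
        (w₂ : Fin q → EuclideanSpace ℝ (Fin N))
        (z₂ : Fin (N - q) → EuclideanSpace ℝ (Fin N)),
        IsONBasisOf w U → IsONBasisOf z Wᗮ → IsONBasisOf w₂ W → IsONBasisOf z₂ Uᗮ →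
        dspVal w z = dspVal w₂ z₂) ∧
    -- triangle inequality: d_sp(U, W) ≤ d_sp(U, Y) + d_sp(Y, W)
    (∀ U W Y : Submodule ℝ (EuclideanSpace ℝ (Fin N)),
      Module.finrank ℝ U = q → Module.finrank ℝ W = q → Module.finrank ℝ Y = q →
      ∀ (wU : Fin q → EuclideanSpace ℝ (Fin N))
        (zW : Fin (N - q) → EuclideanSpace ℝ (Fin N))
        (wU' : Fin q → EuclideanSpace ℝ (Fin N))
        (zY : Fin (N - q) → EuclideanSpace ℝ (Fin N))
        (wY : Fin q → EuclideanSpace ℝ (Fin N))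
        (zW' : Fin (N - q) → EuclideanSpace ℝ (Fin N)),
        IsONBasisOf wU U → IsONBasisOf zW Wᗮ →
        IsONBasisOf wU' U → IsONBasisOf zY Yᗮ →
        IsONBasisOf wY Y → IsONBasisOf zW' Wᗮ →
        dspVal wU zW ≤ dspVal wU' zY + dspVal wY zW') := by
  refine ⟨?_, ?_, ?_⟩
  · intro U W hU hW w w' z z' hw hw' hz hz'
    rw [dspVal_eq_norm hW hw hz, dspVal_eq_norm hW hw' hz']
  · intro U W hU hW w z w₂ z₂ hw hz hw₂ hz₂
    rw [dspVal_eq_norm hW hw hz, dspVal_eq_norm hU hw₂ hz₂, norm_sub_rev]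
  · intro U W Y hU hW hY wU zW wU' zY wY zW' hwU hzW hwU' hzY hwY hzW'
    rw [dspVal_eq_norm hW hwU hzW, dspVal_eq_norm hY hwU' hzY, dspVal_eq_norm hW hwY hzW']
    rw [← add_div]
    apply div_le_div_of_nonneg_right ?_ (by positivity)
    calc ‖mMat U - mMat W‖ = ‖(mMat U - mMat Y) + (mMat Y - mMat W)‖ := by
          rw [sub_add_sub_cancel]
      _ ≤ ‖mMat U - mMat Y‖ + ‖mMat Y - mMat W‖ := norm_add_le _ _
end
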